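/- With necessity arrows at higher type, the type Nat ⇝ (Nat→Nat) is not downward closed: the value λx.λy.((λz.pred(z)) x) belongs to ⟦Nat ⇝ (Nat→Nat)⟧, the term λx.λy.(div x) does not belong to T̄⟦Nat ⇝ (Nat→Nat)⟧, yet div ≲ λz.pred(z) (so replacing the subterm λz.pred(z) by the ≲-smaller closed term div takes the term out of the type). -/

import Mathlib

namespace PCF

/-- Terms of the simple CBV, PCF-like language.  Variables are natural numbers. -/
inductive Tm : Type
  | var : ℕ → Tm
  | zero : Tm
  | succ : Tm → Tm
  | pred : Tm → Tm
  | ifz : Tm → Tm → Tm → Tm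
  | abs : ℕ → Tm → Tm
  | app : Tm → Tm → Tm
  | fix : ℕ → Tm → Tm
  | pair : Tm → Tm → Tm
  | lett : ℕ → ℕ → Tm → Tm → Tm
  deriving DecidableEq

/-- The numeral `succ^n(zero)`. -/
def numeral : ℕ → Tm
  | 0 => .zero
  | n + 1 => .succ (numeral n)

/-- Values. -/
inductive IsValue : Tm → Prop
  | var (x : ℕ) : IsValue (.var x)
  | num (n : ℕ) : IsValue (numeral n)
  | pair {V W : Tm} : IsValue V → IsValue W → IsValue (.pair V W)
  | abs (x : ℕ) (M : Tm) : IsValue (.abs x M)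

/-- Capture-permitting substitution `M[N/x]` (adequate since we only ever
substitute closed terms). -/
def subst (x : ℕ) (N : Tm) : Tm → Tm
  | .var y => if y = x then N else .var y
  | .zero => .zero
  | .succ M => .succ (subst x N M)
  | .pred M => .pred (subst x N M)
  | .ifz M P Q => .ifz (subst x N M) (subst x N P) (subst x N Q)
  | .abs y M => if y = x then .abs y M else .abs y (subst x N M)
  | .app M P => .app (subst x N M) (subst x N P)
  | .fix y M => if y = x then .fix y M else .fix y (subst x N M)
  | .pair M P => .pair (subst x N M) (subst x N P)
  | .lett y z M P =>
      .lett y z (subst x N M) (if y = x ∨ z = x then P else subst x N P)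

/-- Free variables. -/
def fv : Tm → Finset ℕ
  | .var y => {y}
  | .zero => ∅
  | .succ M => fv M
  | .pred M => fv M
  | .ifz M P Q => fv M ∪ fv P ∪ fv Q
  | .abs y M => fv M \ {y}
  | .app M P => fv M ∪ fv P
  | .fix y M => fv M \ {y}
  | .pair M P => fv M ∪ fv P
  | .lett y z M P => fv M ∪ (fv P \ {y, z})

def ClosedTm (M : Tm) : Prop := fv M = ∅

/-- One-step call-by-value reduction (closure of the redex rules under
evaluation contexts). -/
inductive Step : Tm → Tm → Prop
  | ifz_zero {N P : Tm} : Step (.ifz (numeral 0) N P) N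
  | ifz_succ {n : ℕ} {N P : Tm} : Step (.ifz (numeral (n + 1)) N P) P
  | lett_beta {x y : ℕ} {V W M : Tm} : IsValue V → IsValue W →
      Step (.lett x y (.pair V W) M) (subst y W (subst x V M))
  | fix_step {x : ℕ} {M : Tm} : Step (.fix x M) (subst x (.fix x M) M)
  | pred_zero : Step (.pred (numeral 0)) (numeral 0)
  | pred_succ {n : ℕ} : Step (.pred (numeral (n + 1))) (numeral n)
  | beta {x : ℕ} {M V : Tm} : IsValue V → Step (.app (.abs x M) V) (subst x V M)
  | succ_ctx {M M' : Tm} : Step M M' → Step (.succ M) (.succ M')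
  | pred_ctx {M M' : Tm} : Step M M' → Step (.pred M) (.pred M')
  | pair_left {M M' N : Tm} : Step M M' → Step (.pair M N) (.pair M' N)
  | pair_right {V N N' : Tm} : IsValue V → Step N N' → Step (.pair V N) (.pair V N')
  | lett_ctx {x y : ℕ} {M M' N : Tm} : Step M M' → Step (.lett x y M N) (.lett x y M' N)
  | ifz_ctx {M M' N P : Tm} : Step M M' → Step (.ifz M N P) (.ifz M' N P)
  | app_right {x : ℕ} {M N N' : Tm} : Step N N' →
      Step (.app (.abs x M) N) (.app (.abs x M) N')
  | app_left {M M' N : Tm} : Step M M' → Step (.app M N) (.app M' N)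

/-- Many-step reduction. -/
def Steps : Tm → Tm → Prop := Relation.ReflTransGen Step

def NormalForm (M : Tm) : Prop := ¬ ∃ N, Step M N

def Evaluates (M : Tm) : Prop := ∃ V, Steps M V ∧ IsValue V

/-- `M` diverges: it has no normal form. -/
def Diverges (M : Tm) : Prop := ¬ ∃ N, Steps M N ∧ NormalForm N

def Stuck (M : Tm) : Prop := NormalForm M ∧ ¬ IsValue M

def GoesWrong (M : Tm) : Prop := ∃ P, Steps M P ∧ Stuck P

/-- `div` = `fix x. x`. -/
def divTm : Tm := .fix 0 (.var 0)

/-- `P ≲ N`: if `P` reduces to a normal form then `N` reduces to the same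
normal form. -/
def RefBelow (P N : Tm) : Prop := ∀ R, Steps P R → NormalForm R → Steps N R

/-- Fixpoint approximants. -/
def fixApprox (x : ℕ) (M : Tm) : ℕ → Tm
  | 0 => divTm
  | n + 1 => subst x (fixApprox x M n) M


/-- Extended types: arbitrary types allowed on the right of the necessity
arrow. -/
inductive Ty : Type
  | nat : Ty
  | prod : Ty → Ty → Ty
  | arrow : Ty → Ty → Ty
  | narrow : Ty → Ty → Ty
  | ok : Ty
  deriving DecidableEq

/-- `T⟦·⟧` applied to a set of values: the terms that evaluate into it. -/
def TSem (Sv : Tm → Prop) (M : Tm) : Prop :=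
  ClosedTm M ∧ ∃ V, Steps M V ∧ IsValue V ∧ Sv V

/-- `TBar⟦·⟧`: evaluate into the set, or diverge. -/
def TBarSem (Sv : Tm → Prop) (M : Tm) : Prop :=
  TSem Sv M ∨ (ClosedTm M ∧ Diverges M)

/-- Semantics of (extended) types, as sets of closed values. -/
def Sem : Ty → Tm → Prop
  | .nat => fun M => ∃ n, M = numeral n
  | .prod A B => fun M => ∃ V W, M = .pair V W ∧ Sem A V ∧ Sem B W
  | .arrow A B => fun M => ∃ x P, M = .abs x P ∧ ClosedTm M ∧
      ∀ V, ClosedTm V → IsValue V → Sem A V → TBarSem (Sem B) (subst x V P)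
  | .narrow A B => fun M => ∃ x P, M = .abs x P ∧ ClosedTm M ∧
      ∀ V, ClosedTm V → IsValue V → TSem (Sem B) (subst x V P) → Sem A V
  | .ok => fun M => ClosedTm M ∧ IsValue M

/-- The value `λx. λy. ((λz. pred z) x)` (with `x = 0`, `y = 1`, `z = 2`). -/
def term1 : Tm := .abs 0 (.abs 1 (.app (.abs 2 (.pred (.var 2))) (.var 0)))

/-- The term `λx. λy. (div x)`. -/
def term2 : Tm := .abs 0 (.abs 1 (.app divTm (.var 0)))

/-!
Reduction is deterministic, so a term that reaches a stuck term neither evaluates nor diverges.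
For a closed value `V` that is not a numeral, `(λz. pred z) V` reduces to the stuck term `pred V`;
hence `λy. ((λz. pred z) V)` is in `⟦Nat → Nat⟧` only if `V` is a numeral, which puts `term1` in
`⟦Nat ⇝ (Nat → Nat)⟧`. For `term2` take `V = λx. x`: the body `div V` of `λy. (div V)` diverges,
so this function is in `⟦Nat → Nat⟧` although `V ∉ ⟦Nat⟧`. Finally `div` reduces only to itself,
so it has no normal form and is `≲`-below every term.
-/

theorem normalForm_numeral (n : ℕ) : NormalForm (numeral n) := by
  induction n with
  | zero => rintro ⟨N, h⟩; cases h
  | succ n ih => rintro ⟨N, h⟩; cases h with | succ_ctx h => exact ih ⟨_, h⟩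

theorem IsValue.normalForm {V : Tm} (hV : IsValue V) : NormalForm V := by
  induction hV with
  | num n => exact normalForm_numeral n
  | pair _ _ ihV ihW =>
    rintro ⟨N, h⟩
    cases h with
    | pair_left h => exact ihV ⟨_, h⟩
    | pair_right _ h => exact ihW ⟨_, h⟩
  | _ => rintro ⟨N, h⟩; cases h

theorem Step.deterministic : Relator.RightUnique Step := by
  intro M N₁ N₂ h₁ h₂
  have hnum : ∀ {n N}, ¬ Step (numeral n) N := fun h => normalForm_numeral _ ⟨_, h⟩
  have hval : ∀ {V N}, IsValue V → ¬ Step V N := fun hV h => hV.normalForm ⟨_, h⟩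
  induction h₁ generalizing N₂ with
  | @ifz_succ n =>
    -- `cases` cannot solve `numeral n = numeral m`, so the numeral is abstracted first
    generalize hK : numeral (n + 1) = K at h₂
    cases h₂ with
    | ifz_zero => simp [numeral] at hK
    | ifz_succ => rfl
    | ifz_ctx h => exact absurd (hK ▸ h) hnum
  | @pred_succ n =>
    generalize hK : numeral (n + 1) = K at h₂
    cases h₂ with
    | pred_zero => simp [numeral] at hK
    | pred_succ => exact Tm.succ.inj hK
    | pred_ctx h => exact absurd (hK ▸ h) hnum
  | _ => cases h₂ <;> grind [IsValue.pair, IsValue.abs]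

theorem NormalForm.eq_of_steps {N R : Tm} (hN : NormalForm N) (h : Steps N R) : R = N :=
  (Relation.ReflTransGen.cases_head h).elim Eq.symm fun ⟨_, h, _⟩ => absurd ⟨_, h⟩ hN

theorem Steps.eq_of_normalForm {M N₁ N₂ : Tm} (h₁ : Steps M N₁) (h₂ : Steps M N₂)
    (hN₁ : NormalForm N₁) (hN₂ : NormalForm N₂) : N₁ = N₂ := by
  rcases Relation.ReflTransGen.total_of_right_unique Step.deterministic h₁ h₂ with h | h
  · exact (hN₁.eq_of_steps h).symm
  · exact hN₂.eq_of_steps h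

theorem GoesWrong.not_tbarSem {S : Tm → Prop} {M : Tm} (hM : GoesWrong M) : ¬ TBarSem S M := by
  obtain ⟨P, hMP, hP, hPval⟩ := hM
  rintro (⟨-, V, hMV, hV, -⟩ | ⟨-, hdiv⟩)
  · exact hPval (Steps.eq_of_normalForm hMV hMP hV.normalForm hP ▸ hV)
  · exact hdiv ⟨P, hMP, hP⟩

theorem TSem.of_isValue {S : Tm → Prop} {V : Tm} (hV : IsValue V) (h : TSem S V) : S V := by
  obtain ⟨-, W, hVW, -, hW⟩ := h
  rwa [hV.normalForm.eq_of_steps hVW] at hW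

theorem TBarSem.of_isValue {S : Tm → Prop} {V : Tm} (hV : IsValue V) (h : TBarSem S V) : S V :=
  h.elim (TSem.of_isValue hV) fun ⟨_, hdiv⟩ => absurd ⟨V, .refl, hV.normalForm⟩ hdiv

theorem diverges_of_invariant (P : Tm → Prop) (hprog : ∀ M, P M → ∃ N, Step M N)
    (hpres : ∀ M N, P M → Step M N → P N) {M : Tm} (hM : P M) : Diverges M := by
  have hreach : ∀ {N}, Steps M N → P N := by
    intro N h
    induction h with
    | refl => exact hM
    | tail _ h ih => exact hpres _ _ ih h
  rintro ⟨N, hMN, hN⟩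
  exact hN (hprog N (hreach hMN))

theorem step_divTm_iff {N : Tm} : Step divTm N ↔ N = divTm := by
  constructor
  · rintro ⟨⟩
    rfl
  · rintro rfl
    exact Step.fix_step

theorem diverges_divTm : Diverges divTm :=
  diverges_of_invariant (· = divTm) (fun _ h => ⟨divTm, h ▸ step_divTm_iff.2 rfl⟩)
    (fun _ _ h hs => step_divTm_iff.1 (h ▸ hs)) rfl

theorem diverges_divTm_app (N : Tm) : Diverges (.app divTm N) := by
  refine diverges_of_invariant (· = .app divTm N) ?_ ?_ rfl
  · rintro _ rfl
    exact ⟨_, .app_left (step_divTm_iff.2 rfl)⟩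
  · rintro _ _ rfl hs
    cases hs with
    | app_left h => rw [step_divTm_iff.1 h]

theorem RefBelow.of_diverges {M : Tm} (hM : Diverges M) (N : Tm) : RefBelow M N :=
  fun R hR hRnf => absurd ⟨R, hR, hRnf⟩ hM

theorem subst_of_notMem_fv {x : ℕ} {N M : Tm} (hx : x ∉ fv M) : subst x N M = M := by
  induction M <;> grind [subst, fv]

theorem ClosedTm.subst_eq {M : Tm} (hM : ClosedTm M) (x : ℕ) (N : Tm) : subst x N M = M :=
  subst_of_notMem_fv (by simp [show fv M = ∅ from hM])

theorem goesWrong_app_pred {V : Tm} (hV : IsValue V) (hnum : ∀ n, V ≠ numeral n) (z : ℕ) :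
    GoesWrong (.app (.abs z (.pred (.var z))) V) := by
  refine ⟨.pred V, .single (by simpa [subst] using Step.beta (x := z) (M := .pred (.var z)) hV),
    ?_, ?_⟩
  · rintro ⟨N, hs⟩
    cases hs with
    | pred_zero => exact hnum 0 rfl
    | pred_succ => exact hnum _ rfl
    | pred_ctx h => exact hV.normalForm ⟨_, h⟩
  · intro hpred
    generalize hP : Tm.pred V = P at hpred
    cases hpred with
    | num n => cases n <;> cases hP
    | _ => cases hP

theorem sem_term1 : Sem (.narrow .nat (.arrow .nat .nat)) term1 := by
  refine ⟨0, _, rfl, by simp [ClosedTm, term1, fv], fun V hVc hV hT => ?_⟩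
  simp only [subst, one_ne_zero, ↓reduceIte, OfNat.ofNat_ne_zero] at hT
  obtain ⟨x, P, hfun, -, htot⟩ := TSem.of_isValue (.abs _ _) hT
  cases hfun
  have h0 := htot (numeral 0) (by simp [ClosedTm, numeral, fv]) (.num 0) ⟨0, rfl⟩
  simp only [subst, OfNat.ofNat_ne_one, ↓reduceIte, hVc.subst_eq] at h0
  by_contra hnum
  exact (goesWrong_app_pred hV (fun n hn => hnum ⟨n, hn⟩) 2).not_tbarSem h0

theorem not_tbarSem_term2 : ¬ TBarSem (Sem (.narrow .nat (.arrow .nat .nat))) term2 := by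
  intro h
  obtain ⟨x, P, hfun, -, hnec⟩ := TBarSem.of_isValue (.abs _ _) h
  cases hfun
  have hclosed : ClosedTm (.app divTm (.abs 0 (.var 0))) := by simp [ClosedTm, divTm, fv]
  have hloop : Sem (.arrow .nat .nat) (.abs 1 (.app divTm (.abs 0 (.var 0)))) := by
    refine ⟨1, _, rfl, by simp [ClosedTm, divTm, fv], fun U _ _ _ => ?_⟩
    rw [hclosed.subst_eq]
    exact .inr ⟨hclosed, diverges_divTm_app _⟩
  obtain ⟨n, hn⟩ := hnec (.abs 0 (.var 0)) (by simp [ClosedTm, fv]) (.abs _ _)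
    ⟨by simp [subst, divTm, ClosedTm, fv], _, .refl, .abs _ _, hloop⟩
  cases n <;> cases hn

/-- with necessity at higher type, `Nat ⇝ (Nat → Nat)` is not
downward closed: `λx.λy.((λz.pred z) x)` is in the type, `λx.λy.(div x)` is
not (even up to divergence), yet `div ≲ λz.pred z`. -/
theorem narrow_not_downward_closed :
    Sem (.narrow .nat (.arrow .nat .nat)) term1 ∧
    ¬ TBarSem (Sem (.narrow .nat (.arrow .nat .nat))) term2 ∧
    RefBelow divTm (.abs 2 (.pred (.var 2))) :=
  ⟨sem_term1, not_tbarSem_term2, .of_diverges diverges_divTm _⟩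

end PCF
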